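/- Let K be a discrete valued field of characteristic p with valuation v and let α ∈ K be optimal with v(α) = 0 and such that X^p − X − α is irreducible. Then the residue of α is not in 𝒫(k) and the Artin-Schreier extension L = K[x]/(x^p − x − α) is unramified over K with residue extension l = k[ȳ]/(ȳ^p − ȳ − ᾱ), a separable extension of degree p. -/

import Mathlib

/-!
A lift `γ` of a solution of `c ^ p - c = ᾱ` would give `v (α - (γ ^ p - γ)) > 0`, contradicting
optimality, so `ᾱ ∉ 𝒫(k)`; an Artin–Schreier polynomial without a root is irreducible, hence the
residue `ȳ` of `x` (a unit, as `x ^ p - x = α` is) has degree `p` over `k`. Then the residues of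
`1, x, …, x ^ (p - 1)` are linearly independent, which forces `w (∑ aᵢ xⁱ) = minᵢ v aᵢ`: the value
group does not grow, and every element of `O_L` is a polynomial in `x` over `O_K`, so `l = k(ȳ)`.
-/

open Polynomial

section ArtinSchreierPolynomial

variable {F : Type*} [Field F] {p : ℕ}

theorem natDegree_X_pow_sub_X_sub_C (hp : 1 < p) (a : F) :
    (X ^ p - X - C a : F[X]).natDegree = p := by
  rw [sub_sub, natDegree_sub_eq_left_of_natDegree_lt] <;> simp [hp]

theorem monic_X_pow_sub_X_sub_C (hp : 1 < p) (a : F) : (X ^ p - X - C a : F[X]).Monic := by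
  rw [sub_sub]
  refine monic_X_pow_sub ?_
  rw [degree_X_add_C]
  exact_mod_cast hp

theorem separable_X_pow_sub_X_sub_C [CharP F p] (a : F) : (X ^ p - X - C a : F[X]).Separable := by
  have hder : derivative (X ^ p - X - C a : F[X]) = -1 := by
    simp [derivative_X_pow]
  rw [separable_def, hder]
  exact isCoprime_one_right.neg_right

variable [Fact p.Prime] [CharP F p]

/-- Over a splitting field, the roots of `g` differ from one of them, `y`, by elements of `𝔽_p`,
so the sum of the roots, `-g.nextCoeff ∈ F`, is `g.natDegree • y` up to an element of `𝔽_p`;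
as `g.natDegree` is invertible, `y ∈ F`. -/
theorem exists_pow_sub_self_eq_of_monic_dvd {a : F} {g : F[X]} (hg : g.Monic)
    (hdvd : g ∣ X ^ p - X - C a) (hdeg : ¬ p ∣ g.natDegree) : ∃ c : F, c ^ p - c = a := by
  set E := SplittingField g
  set φ := algebraMap F E
  set R := (g.map φ).roots
  have hsplit : Splits (g.map φ) := SplittingField.splits g
  have hcard : R.card = g.natDegree := by
    rw [← natDegree_map φ, ← splits_iff_card_roots.1 hsplit]
  obtain ⟨y, hy⟩ : ∃ y, y ∈ R := Multiset.card_pos_iff_exists_mem.1 <| by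
    rw [hcard]
    exact Nat.pos_of_ne_zero fun h => hdeg (h ▸ dvd_zero p)
  have hAS : ∀ r ∈ R, r ^ p - r = φ a := by
    intro r hr
    simpa [sub_eq_zero] using eval_eq_zero_of_dvd_of_eval_eq_zero (Polynomial.map_dvd φ hdvd)
      (isRoot_of_mem_roots hr)
  have hbot : ∀ r ∈ R, r - y ∈ (⊥ : Subfield E) := by
    intro r hr
    rw [Subfield.mem_bot_iff_pow_eq_self E p, sub_pow_char]
    linear_combination hAS r hr - hAS y hy
  obtain ⟨n, hn⟩ := (mem_bot_iff_intCast p E).1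
    (Subfield.multiset_sum_mem _ (R.map (· - y)) (by simpa using hbot))
  have hsum : (R.map (· - y)).sum = R.sum - g.natDegree * y := by
    rw [Multiset.sum_map_sub, Multiset.map_id', Multiset.map_const', Multiset.sum_replicate, hcard,
      nsmul_eq_mul]
  have hnext : φ g.nextCoeff = -R.sum := by
    rw [← nextCoeff_map φ.injective, hsplit.nextCoeff_eq_neg_sum_roots_of_monic (hg.map φ)]
  have hd : (g.natDegree : E) ≠ 0 := by rwa [Ne, CharP.cast_eq_zero_iff E p]
  refine ⟨-(g.nextCoeff + n) / g.natDegree, φ.injective ?_⟩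
  have hc : φ (-(g.nextCoeff + n) / g.natDegree) = y := by
    rw [map_div₀, map_neg, map_add, map_intCast, map_natCast, div_eq_iff hd, hnext, hn, hsum]
    ring
  rw [map_sub, map_pow, hc]
  exact hAS y hy

theorem irreducible_X_pow_sub_X_sub_C {a : F} (ha : ∀ c : F, c ^ p - c ≠ a) :
    Irreducible (X ^ p - X - C a : F[X]) := by
  have hp : 1 < p := (Fact.out : p.Prime).one_lt
  have hdeg := natDegree_X_pow_sub_X_sub_C hp a
  have hm := monic_X_pow_sub_X_sub_C hp a
  rw [hm.irreducible_iff_lt_natDegree_lt (fun h => by simp [h] at hdeg; omega)]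
  intro q hq hqdeg hdvd
  rw [Finset.mem_Ioc, hdeg] at hqdeg
  obtain ⟨c, hc⟩ := exists_pow_sub_self_eq_of_monic_dvd hq hdvd
    (Nat.not_dvd_of_pos_of_lt hqdeg.1 (by omega))
  exact ha c hc

variable {L : Type*} [Field L] [Algebra F L]

theorem minpoly_eq_X_pow_sub_X_sub_C {a : F} (ha : ∀ c : F, c ^ p - c ≠ a) {y : L}
    (hy : y ^ p - y = algebraMap F L a) : minpoly F y = X ^ p - X - C a :=
  (minpoly.eq_of_irreducible_of_monic (irreducible_X_pow_sub_X_sub_C ha) (by simp [hy])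
    (monic_X_pow_sub_X_sub_C (Fact.out : p.Prime).one_lt a)).symm

theorem isSeparable_and_finrank_eq_of_adjoin_eq_top {a : F} (ha : ∀ c : F, c ^ p - c ≠ a)
    {y : L} (hy : y ^ p - y = algebraMap F L a) (htop : Algebra.adjoin F {y} = ⊤) :
    Algebra.IsSeparable F L ∧ Module.finrank F L = p := by
  have hmin := minpoly_eq_X_pow_sub_X_sub_C ha hy
  have hsep : IsSeparable F y := by
    rw [IsSeparable, hmin]
    exact separable_X_pow_sub_X_sub_C a
  refine ⟨(separableClosure.eq_top_iff F L).1 (top_le_iff.1 ?_), ?_⟩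
  · rw [← IntermediateField.adjoin_eq_top_of_algebra F {y} htop, IntermediateField.adjoin_le_iff,
      Set.singleton_subset_iff]
    exact mem_separableClosure_iff.2 hsep
  · rw [(PowerBasis.ofAdjoinEqTop' hsep.isIntegral htop).finrank, PowerBasis.ofAdjoinEqTop'_dim,
      hmin, natDegree_X_pow_sub_X_sub_C (Fact.out : p.Prime).one_lt]

end ArtinSchreierPolynomial

theorem AddValuation.map_eq_zero_of_map_pow_sub_self_eq_zero {R Γ : Type*} [CommRing R]
    [AddCommGroup Γ] [LinearOrder Γ] [IsOrderedAddMonoid Γ] (w : AddValuation R (WithTop Γ))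
    {p : ℕ} (hp : 1 < p) {x : R} (h : w (x ^ p - x) = 0) : w x = 0 := by
  have hpow : w (x ^ p) = w x + w (x ^ (p - 1)) := by
    rw [← w.map_mul, ← pow_succ', Nat.sub_add_cancel hp.le]
  rcases lt_trichotomy (w x) 0 with hneg | hzero | hpos
  · obtain ⟨g, hg⟩ := WithTop.ne_top_iff_exists.1 hneg.ne_top
    have hg0 : g < 0 := by rw [← hg] at hneg; exact_mod_cast hneg
    have hlt : w (x ^ p) < w x := by
      rw [hpow, w.map_pow, ← hg, ← WithTop.coe_nsmul, ← WithTop.coe_add, WithTop.coe_lt_coe]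
      exact add_lt_of_neg_right g (nsmul_neg hg0 (by omega))
    rw [w.map_sub_eq_of_lt_left hlt] at h
    exact absurd h (hlt.trans hneg).ne
  · exact hzero
  · have hxp : 0 < w (x ^ p) := by
      rw [hpow]
      refine hpos.trans_le (le_add_of_nonneg_right ?_)
      rw [w.map_pow]
      exact nsmul_nonneg hpos.le _
    exact absurd h (lt_min hxp hpos |>.trans_le (w.map_sub _ _)).ne'

theorem residue_ne_pow_sub_self_of_optimal {K k Γ : Type*} [CommRing K] [CommRing k]
    [Preorder Γ] [Zero Γ] {p : ℕ} [Fact p.Prime] [CharP K p] (v : K → Γ) {O : Subring K}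
    (res : O →+* k) (hres : Function.Surjective res) (hker : ∀ y : O, res y = 0 → 0 < v y)
    {α : O} (hval : v α = 0) (hopt : ∀ γ : K, v (α + (γ ^ p - γ)) ≤ v α) (c : k) :
    c ^ p - c ≠ res α := by
  intro hc
  obtain ⟨γ, rfl⟩ := hres c
  have hpos : 0 < v ↑(α - (γ ^ p - γ)) :=
    hker _ (by rw [map_sub, map_sub, map_pow, hc, sub_self])
  have hneg : v ↑(α - (γ ^ p - γ)) ≤ 0 := by
    have hγ : (-(γ : K)) ^ p = -(γ : K) ^ p := by rw [neg_pow, neg_one_pow_char K p]; ring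
    simpa [hγ, hval, sub_eq_add_neg, add_comm] using hopt (-γ)
  exact (hpos.trans_le hneg).ne rfl

theorem exists_natDegree_lt_aeval_eq {R S : Type*} [CommRing R] [CommRing S] [Algebra R S]
    {x : S} (hx : Algebra.adjoin R {x} = ⊤) {f : R[X]} (hf : f.Monic) (hf1 : f ≠ 1)
    (hfx : aeval x f = 0) (y : S) : ∃ Q : R[X], Q.natDegree < f.natDegree ∧ aeval x Q = y := by
  obtain ⟨P, rfl⟩ : ∃ P : R[X], aeval x P = y := by
    rw [← AlgHom.mem_range, ← Algebra.adjoin_singleton_eq_range_aeval, hx]; trivial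
  exact ⟨P %ₘ f, natDegree_modByMonic_lt P hf hf1, aeval_modByMonic_eq_self_of_root hfx⟩

theorem map_eval₂_eq_aeval_map {A B C D : Type*} [CommSemiring A] [CommSemiring B]
    [CommSemiring C] [CommSemiring D] [Algebra C D] {f : A →+* B} {g : A →+* C} {h : B →+* D}
    (hcomm : ∀ a, algebraMap C D (g a) = h (f a)) (P : A[X]) (b : B) :
    h (P.eval₂ f b) = aeval (h b) (P.map g) := by
  rw [aeval_def, eval₂_map, hom_eval₂]
  congr 1
  ext a
  exact (hcomm a).symm

theorem mem_lifts_of_val_coeff_nonneg {R Γ₀ : Type*} [Ring R]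
    [LinearOrderedAddCommMonoidWithTop Γ₀] {V : AddValuation R Γ₀} {O : Subring R}
    (hO : ∀ y, y ∈ O ↔ 0 ≤ V y) {Q : R[X]} (hQ : ∀ i ∈ Q.support, 0 ≤ V (Q.coeff i)) :
    Q ∈ lifts O.subtype := by
  refine (lifts_iff_coeff_lifts Q).2 fun i => ?_
  by_cases hi : i ∈ Q.support
  · exact ⟨⟨_, (hO _).2 (hQ i hi)⟩, rfl⟩
  · exact ⟨0, by rw [notMem_support_iff.1 hi, map_zero]⟩

section ResidueExtension

variable {K L k l : Type*} [Field K] [Field L] [Algebra K L] [Field k] [Field l] [Algebra k l]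
  {V : AddValuation K (WithTop ℤ)} {W : AddValuation L (WithTop ℚ)}
  {OK : Subring K} {OL : Subring L} {resK : OK →+* k} {resL : OL →+* l} {ι : OK →+* OL}

theorem val_aeval_eq_zero_of_map_residue_ne_zero
    (hOL : ∀ y, y ∈ OL ↔ 0 ≤ W y) (hresL : ∀ y : OL, 0 < W y → resL y = 0)
    (hι : ∀ y, (ι y : L) = algebraMap K L y)
    (hres : ∀ y, algebraMap k l (resK y) = resL (ι y))
    (xO : OL) {P : OK[X]} (hP : P.natDegree < (minpoly k (resL xO)).natDegree)
    (hP0 : P.map resK ≠ 0) : W (aeval (xO : L) (P.map OK.subtype)) = 0 := by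
  have hcoe : ((P.eval₂ ι xO : OL) : L) = aeval (xO : L) (P.map OK.subtype) :=
    map_eval₂_eq_aeval_map (h := OL.subtype) (fun y => (hι y).symm) P xO
  rw [← hcoe]
  refine le_antisymm (not_lt.1 fun hpos => ?_) ((hOL _).1 (P.eval₂ ι xO).2)
  have hroot := hresL _ hpos
  rw [map_eval₂_eq_aeval_map hres] at hroot
  have hle := natDegree_le_natDegree (minpoly.degree_le_of_ne_zero k _ hP0 hroot)
  exact absurd (hle.trans (natDegree_map_le)) (not_le.2 hP)

theorem val_aeval_eq_inf_val_coeff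
    (hcomp : ∀ y, W (algebraMap K L y) = WithTop.map (fun j : ℤ => (j : ℚ)) (V y))
    (hOK : ∀ y, y ∈ OK ↔ 0 ≤ V y) (hOL : ∀ y, y ∈ OL ↔ 0 ≤ W y)
    (hresL : ∀ y : OL, 0 < W y → resL y = 0)
    (hι : ∀ y, (ι y : L) = algebraMap K L y)
    (hres : ∀ y, algebraMap k l (resK y) = resL (ι y))
    (xO : OL) {Q : K[X]} (hQ : Q.natDegree < (minpoly k (resL xO)).natDegree) :
    W (aeval (xO : L) Q) =
      WithTop.map (fun j : ℤ => (j : ℚ)) (Q.support.inf fun i => V (Q.coeff i)) := by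
  rcases eq_or_ne Q 0 with rfl | hQ0
  · simp
  obtain ⟨i₀, hi₀, hinf⟩ := Q.support.exists_mem_eq_inf (nonempty_support_iff.2 hQ0)
    fun i => V (Q.coeff i)
  set a := Q.coeff i₀
  have ha : a ≠ 0 := mem_support_iff.1 hi₀
  have hVa : V a ≠ ⊤ := (V.ne_top_iff).2 ha
  have hmin : ∀ i, V a ≤ V (Q.coeff i) := fun i => by
    by_cases hi : i ∈ Q.support
    · exact hinf ▸ Finset.inf_le hi
    · simp [notMem_support_iff.1 hi]
  obtain ⟨P, hP⟩ := (mem_lifts _).1 <| mem_lifts_of_val_coeff_nonneg hOK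
    (Q := C a⁻¹ * Q) fun i _ => by
      rw [coeff_C_mul, V.map_mul, V.map_inv,
        ← LinearOrderedAddCommGroupWithTop.neg_add_cancel_of_ne_top hVa]
      exact add_le_add_right (hmin i) _
  have hPdeg : P.natDegree < (minpoly k (resL xO)).natDegree := by
    rwa [← natDegree_map_eq_of_injective OK.subtype_injective, hP,
      natDegree_C_mul (inv_ne_zero ha)]
  have hP0 : P.map resK ≠ 0 := by
    have hPi₀ : (P.coeff i₀ : K) = a⁻¹ * a := by
      simpa [coeff_C_mul] using congrArg (coeff · i₀) hP
    rw [inv_mul_cancel₀ ha, ← OK.coe_one, Subtype.coe_inj] at hPi₀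
    intro h
    simpa [hPi₀] using congrArg (coeff · i₀) h
  have hW := val_aeval_eq_zero_of_map_residue_ne_zero hOL hresL hι hres xO hPdeg hP0
  have hQa : aeval (xO : L) Q = algebraMap K L a * aeval (xO : L) (C a⁻¹ * Q) := by
    rw [map_mul, aeval_C, ← mul_assoc, ← map_mul, mul_inv_cancel₀ ha, map_one, one_mul]
  rw [hQa, W.map_mul, ← hP, hW, add_zero, hcomp, hinf]

theorem adjoin_residue_eq_top
    (hcomp : ∀ y, W (algebraMap K L y) = WithTop.map (fun j : ℤ => (j : ℚ)) (V y))
    (hOK : ∀ y, y ∈ OK ↔ 0 ≤ V y) (hOL : ∀ y, y ∈ OL ↔ 0 ≤ W y)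
    (hresL : ∀ y : OL, 0 < W y → resL y = 0) (hresLsurj : Function.Surjective resL)
    (hι : ∀ y, (ι y : L) = algebraMap K L y)
    (hres : ∀ y, algebraMap k l (resK y) = resL (ι y))
    (xO : OL) (hrep : ∀ z : L, ∃ Q : K[X],
      Q.natDegree < (minpoly k (resL xO)).natDegree ∧ aeval (xO : L) Q = z) :
    Algebra.adjoin k {resL xO} = ⊤ := by
  refine eq_top_iff.2 fun z _ => ?_
  obtain ⟨zO, rfl⟩ := hresLsurj z
  obtain ⟨Q, hQ, hQz⟩ := hrep zO
  have hnonneg : 0 ≤ Q.support.inf fun i => V (Q.coeff i) := by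
    have h := (hOL _).1 zO.2
    rw [← hQz, val_aeval_eq_inf_val_coeff hcomp hOK hOL hresL hι hres xO hQ] at h
    exact (WithTop.map_le_iff (y := 0) _ Int.cast_le).1 h
  obtain ⟨P, rfl⟩ := (mem_lifts _).1 <|
    mem_lifts_of_val_coeff_nonneg hOK fun i hi => hnonneg.trans (Finset.inf_le hi)
  have hzO : zO = P.eval₂ ι xO := Subtype.ext <| hQz.symm.trans
    (map_eval₂_eq_aeval_map (h := OL.subtype) (fun y => (hι y).symm) P xO).symm
  rw [hzO, map_eval₂_eq_aeval_map hres]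
  exact aeval_mem_adjoin_singleton k _

theorem exists_val_eq_intCast_of_ne_zero
    (hcomp : ∀ y, W (algebraMap K L y) = WithTop.map (fun j : ℤ => (j : ℚ)) (V y))
    (hOK : ∀ y, y ∈ OK ↔ 0 ≤ V y) (hOL : ∀ y, y ∈ OL ↔ 0 ≤ W y)
    (hresL : ∀ y : OL, 0 < W y → resL y = 0)
    (hι : ∀ y, (ι y : L) = algebraMap K L y)
    (hres : ∀ y, algebraMap k l (resK y) = resL (ι y))
    (xO : OL) (hrep : ∀ z : L, ∃ Q : K[X],
      Q.natDegree < (minpoly k (resL xO)).natDegree ∧ aeval (xO : L) Q = z)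
    {z : L} (hz : z ≠ 0) : ∃ j : ℤ, W z = ((j : ℚ) : WithTop ℚ) := by
  obtain ⟨Q, hQ, rfl⟩ := hrep z
  have hW := val_aeval_eq_inf_val_coeff hcomp hOK hOL hresL hι hres xO hQ
  cases h : Q.support.inf fun i => V (Q.coeff i) with
  | top => exact absurd (by simpa [h] using hW) (W.ne_top_iff.2 hz)
  | coe j => exact ⟨j, by rw [hW, h]; rfl⟩

end ResidueExtension

theorem artinSchreier_unramified_general
    {K L : Type*} [Field K] [Field L] [Algebra K L]
    (p : ℕ) [Fact p.Prime] [CharP K p]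
    (v : K → WithTop ℤ)
    (hv0 : v 0 = ⊤) (hv1 : v 1 = 0)
    (hvmul : ∀ x y : K, v (x * y) = v x + v y)
    (hvadd : ∀ x y : K, min (v x) (v y) ≤ v (x + y))
    (hvsurj : ∀ j : ℤ, ∃ x : K, v x = (j : WithTop ℤ))
    (OK : Subring K) (hOK : ∀ x : K, x ∈ OK ↔ 0 ≤ v x)
    {k : Type*} [Field k] (resK : OK →+* k)
    (hresKsurj : Function.Surjective resK)
    (hresKker : ∀ x : OK, resK x = 0 ↔ 0 < v (x : K))
    (α : OK) (hval : v (α : K) = 0)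
    (hopt : ∀ γ : K, v ((α : K) + (γ ^ p - γ)) ≤ v (α : K))
    (x : L) (hx : x ^ p - x = algebraMap K L (α : K))
    (hgen : Algebra.adjoin K {x} = ⊤)
    (w : L → WithTop ℚ)
    (hw0 : w 0 = ⊤) (hw1 : w 1 = 0)
    (hwmul : ∀ x y : L, w (x * y) = w x + w y)
    (hwadd : ∀ x y : L, min (w x) (w y) ≤ w (x + y))
    (hcomp : ∀ y : K, w (algebraMap K L y) = WithTop.map (fun j : ℤ => (j : ℚ)) (v y))
    (OL : Subring L) (hOL : ∀ y : L, y ∈ OL ↔ 0 ≤ w y)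
    {l : Type*} [Field l] (resL : OL →+* l)
    (hresLsurj : Function.Surjective resL)
    (hresLker : ∀ y : OL, resL y = 0 ↔ 0 < w (y : L))
    [Algebra k l]
    (hrescomp : ∀ (y : OK) (hy : algebraMap K L (y : K) ∈ OL),
      algebraMap k l (resK y) = resL ⟨algebraMap K L (y : K), hy⟩) :
    -- `ᾱ ∉ 𝒫(k)`
    (∀ c : k, c ^ p - c ≠ resK α) ∧
    -- the value group of `L` equals `Γ_K = ℤ`
    (∀ q : ℚ, (∃ y : L, y ≠ 0 ∧ w y = (q : WithTop ℚ)) ↔ ∃ j : ℤ, q = (j : ℚ)) ∧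
    -- the residue extension is `l = k[ȳ]/(ȳ^p − ȳ − ᾱ)`, separable of degree `p`
    Algebra.IsSeparable k l ∧ Module.finrank k l = p ∧
    (∃ ybar : l, ybar ^ p - ybar = algebraMap k l (resK α) ∧
      Algebra.adjoin k {ybar} = ⊤) := by
  have hp := (Fact.out : p.Prime).one_lt
  let V := AddValuation.of v hv0 hv1 hvadd hvmul
  let W := AddValuation.of w hw0 hw1 hwadd hwmul
  have : CharP k p := (CharP.charP_iff_prime_eq_zero Fact.out).2 <| by
    rw [← map_natCast resK, show (p : OK) = 0 from Subtype.ext (by simp), map_zero]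
  have hnotP := residue_ne_pow_sub_self_of_optimal v resK hresKsurj (fun y => (hresKker y).1)
    hval hopt
  have hwα : w (algebraMap K L α) = 0 := by rw [hcomp, hval]; rfl
  have hwx : w x = 0 := W.map_eq_zero_of_map_pow_sub_self_eq_zero hp (by rw [hx]; exact hwα)
  let xO : OL := ⟨x, (hOL x).2 hwx.ge⟩
  let ι : OK →+* OL := (algebraMap K L).restrict OK OL fun y hy => (hOL _).2 <| by
    rw [hcomp]; exact (WithTop.map_le_iff (y := 0) _ Int.cast_le).2 ((hOK y).1 hy)
  have hres : ∀ y, algebraMap k l (resK y) = resL (ι y) := fun y => hrescomp y _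
  have hybar : resL xO ^ p - resL xO = algebraMap k l (resK α) := by
    rw [hres, ← map_pow, ← map_sub]; exact congrArg resL (Subtype.ext hx)
  have hrep : ∀ z : L, ∃ Q : K[X],
      Q.natDegree < (minpoly k (resL xO)).natDegree ∧ aeval x Q = z := by
    have hdeg := natDegree_X_pow_sub_X_sub_C hp (α : K)
    have hm := monic_X_pow_sub_X_sub_C hp (α : K)
    rw [minpoly_eq_X_pow_sub_X_sub_C hnotP hybar, natDegree_X_pow_sub_X_sub_C hp, ← hdeg]
    exact exists_natDegree_lt_aeval_eq hgen hm (hm.natDegree_pos.1 (by omega)) (by simp [hx])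
  have hresL : ∀ y : OL, 0 < w y → resL y = 0 := fun y => (hresLker y).2
  have htop := adjoin_residue_eq_top (V := V) (W := W) hcomp hOK hOL hresL hresLsurj
    (fun _ => rfl) hres xO hrep
  obtain ⟨hsep, hfin⟩ := isSeparable_and_finrank_eq_of_adjoin_eq_top hnotP hybar htop
  refine ⟨hnotP, fun q => ⟨?_, ?_⟩, hsep, hfin, resL xO, hybar, htop⟩
  · rintro ⟨y, hy, hwy⟩
    obtain ⟨j, hj⟩ := exists_val_eq_intCast_of_ne_zero (V := V) (W := W) hcomp hOK hOL hresL
      (fun _ => rfl) hres xO hrep hy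
    exact ⟨j, by exact_mod_cast hwy.symm.trans hj⟩
  · rintro ⟨j, rfl⟩
    obtain ⟨c, hc⟩ := hvsurj j
    have hc0 : c ≠ 0 := by rintro rfl; simp [hv0] at hc
    exact ⟨algebraMap K L c, (_root_.map_ne_zero _).2 hc0, by rw [hcomp, hc]; rfl⟩

/-- Let `K` be a discrete valued field of characteristic `p` with
valuation `v` (value group `ℤ`), valuation ring `O_K`, residue field `k` (given by a
surjection `resK : O_K → k` with kernel `m_K`).  Let `α ∈ O_K` be optimal with
`v(α) = 0` such that `X^p − X − α` is irreducible, and let `L = K[x]/(x^p − x − α)`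
with a valuation `w` extending `v`, valuation ring `O_L` and residue field `l`.
Then `ᾱ ∉ 𝒫(k)`, and `L/K` is unramified: the value group of `L` is still `ℤ`, and the
residue extension `l/k` is separable of degree `p`, generated by a root `ȳ` of
`ȳ^p − ȳ − ᾱ`. -/
theorem artinSchreier_unramified
    {K L : Type*} [Field K] [Field L] [Algebra K L]
    (p : ℕ) [Fact p.Prime] [CharP K p]
    (v : K → WithTop ℤ)
    (hv0 : v 0 = ⊤) (hv1 : v 1 = 0)
    (hvmul : ∀ x y : K, v (x * y) = v x + v y)
    (hvadd : ∀ x y : K, min (v x) (v y) ≤ v (x + y))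
    (hvsurj : ∀ j : ℤ, ∃ x : K, v x = (j : WithTop ℤ))
    (OK : Subring K) (hOK : ∀ x : K, x ∈ OK ↔ 0 ≤ v x)
    {k : Type*} [Field k] (resK : OK →+* k)
    (hresKsurj : Function.Surjective resK)
    (hresKker : ∀ x : OK, resK x = 0 ↔ 0 < v (x : K))
    (α : OK) (hval : v (α : K) = 0)
    (hopt : ∀ γ : K, v ((α : K) + (γ ^ p - γ)) ≤ v (α : K))
    (hirr : Irreducible (Polynomial.X ^ p - Polynomial.X
      - Polynomial.C (α : K) : Polynomial K))
    (x : L) (hx : x ^ p - x = algebraMap K L (α : K))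
    (hgen : Algebra.adjoin K {x} = ⊤) (hdeg : Module.finrank K L = p)
    (w : L → WithTop ℚ)
    (hw0 : w 0 = ⊤) (hw1 : w 1 = 0)
    (hwmul : ∀ x y : L, w (x * y) = w x + w y)
    (hwadd : ∀ x y : L, min (w x) (w y) ≤ w (x + y))
    (hcomp : ∀ y : K, w (algebraMap K L y) = WithTop.map (fun j : ℤ => (j : ℚ)) (v y))
    (OL : Subring L) (hOL : ∀ y : L, y ∈ OL ↔ 0 ≤ w y)
    {l : Type*} [Field l] (resL : OL →+* l)
    (hresLsurj : Function.Surjective resL)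
    (hresLker : ∀ y : OL, resL y = 0 ↔ 0 < w (y : L))
    [Algebra k l]
    (hrescomp : ∀ (y : OK) (hy : algebraMap K L (y : K) ∈ OL),
      algebraMap k l (resK y) = resL ⟨algebraMap K L (y : K), hy⟩) :
    -- `ᾱ ∉ 𝒫(k)`
    (∀ c : k, c ^ p - c ≠ resK α) ∧
    -- the value group of `L` equals `Γ_K = ℤ`
    (∀ q : ℚ, (∃ y : L, y ≠ 0 ∧ w y = (q : WithTop ℚ)) ↔ ∃ j : ℤ, q = (j : ℚ)) ∧
    -- the residue extension is `l = k[ȳ]/(ȳ^p − ȳ − ᾱ)`, separable of degree `p`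
    Algebra.IsSeparable k l ∧ Module.finrank k l = p ∧
    (∃ ybar : l, ybar ^ p - ybar = algebraMap k l (resK α) ∧
      Algebra.adjoin k {ybar} = ⊤) :=
  artinSchreier_unramified_general p v hv0 hv1 hvmul hvadd hvsurj OK hOK resK hresKsurj hresKker α
    hval hopt x hx hgen w hw0 hw1 hwmul hwadd hcomp OL hOL resL hresLsurj hresLker hrescomp
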